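/- For positive integers r ≤ d, the sequence N_{d,r} satisfies N_{d,r}(1) = 1 and N_{d,r}(s) = N_{d,r}(s−1) + N_{d,r}(s−d−1) for all s ≥ 2, where N_{d,r}(t) := 1 for t < 0 and N_{d,r}(0) := N_{d,1}(r). -/

import Mathlib

/-- A finite set of naturals is `d`-th order twin-free:
any two distinct elements differ by more than `d`. -/
def TwinFree (d : ℕ) (β : Finset ℕ) : Prop :=
  ∀ x ∈ β, ∀ y ∈ β, x ≠ y → d < max x y - min x y

instance (d : ℕ) : DecidablePred (TwinFree d) := fun β => by
  unfold TwinFree; infer_instance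


/-- `N d r s`: the number of `d`-th order twin-free subsets `β` of `{1, …, s+r−1}`
such that `x ∈ β, x ≥ s → x − s ∈ β` and `x ∈ β, x ≥ s+r → x − (s+r) ∈ β`. -/
def N (d r s : ℕ) : ℕ :=
  ((Finset.Icc 1 (s + r - 1)).powerset.filter
    (fun β => TwinFree d β ∧ (∀ x ∈ β, s ≤ x → x - s ∈ β) ∧
      (∀ x ∈ β, s + r ≤ x → x - (s + r) ∈ β))).card


/-- `N1 d t = N_{d,1}(t)`: the number of `d`-th order twin-free subsets of `{1, …, t−1}`. -/
def N1 (d t : ℕ) : ℕ := ((Finset.Icc 1 (t - 1)).powerset.filter (TwinFree d)).card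

/-- Extension of `N_{d,1}` to integer arguments, with value `1` for `t ≤ 0`. -/
def N1ext (d : ℕ) (t : ℤ) : ℕ := if t ≤ 0 then 1 else N1 d t.toNat

/-- Extension of N_{d,r} to integer arguments: 1 for t < 0 and N_{d,1}(r) for t = 0. -/
def Next (d r : ℕ) (t : ℤ) : ℕ :=
  if t < 0 then 1 else if t = 0 then N1 d r else N d r t.toNat

/-!
All elements of a set counted by `N d r s` are below `s + r`, so only the wrap-around by `s`
matters. Such a set either lies in `{1, …, s - 1}`, or it contains exactly one element `s + j ≥ s`
(`1 ≤ j < r`, unique because `r ≤ d`) and then also `j`, which forces `s > d`; its remaining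
elements form an arbitrary twin-free subset of the gap strictly between `j + d` and `s + j - d`.
Writing `g m` for the number of twin-free subsets of `{1, …, m}`, this gives
`N d r s = g (s - 1) + [d < s] (r - 1) g (s - 2d - 1)`, and the recurrence for `N` follows from
`g (m + 1) = g m + g (m - d)` (according to whether `m + 1` belongs to the set).
-/

open Finset

lemma card_eq_of_mem_iff_sdiff_mem {α : Type*} [DecidableEq α] {X Y : Finset (Finset α)}
    {A : Finset α} (hY : ∀ γ ∈ Y, Disjoint γ A) (hX : ∀ β, β ∈ X ↔ A ⊆ β ∧ β \ A ∈ Y) :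
    #X = #Y := by
  refine card_nbij' (· \ A) (· ∪ A) (fun β hβ => ((hX β).1 hβ).2) (fun γ hγ => ?_)
    (fun β hβ => sdiff_union_of_subset ((hX β).1 hβ).1)
    (fun γ hγ => union_sdiff_cancel_right (hY γ hγ))
  rw [mem_coe, hX, union_sdiff_cancel_right (hY γ hγ)]
  exact ⟨subset_union_right, hγ⟩

lemma twinFree_iff_lt {d : ℕ} {β : Finset ℕ} :
    TwinFree d β ↔ ∀ x ∈ β, ∀ y ∈ β, x < y → x + d < y := by
  refine ⟨fun h x hx y hy hxy => ?_, fun h x hx y hy hne => ?_⟩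
  · have := h x hx y hy hxy.ne
    omega
  · rcases hne.lt_or_gt with hxy | hxy
    · have := h x hx y hy hxy
      omega
    · have := h y hy x hx hxy
      omega

lemma TwinFree.mono {d : ℕ} {β γ : Finset ℕ} (hγ : γ ⊆ β) (hβ : TwinFree d β) :
    TwinFree d γ :=
  fun x hx y hy => hβ x (hγ hx) y (hγ hy)

lemma TwinFree.union {d : ℕ} {A B : Finset ℕ} (hA : TwinFree d A) (hB : TwinFree d B)
    (hAB : ∀ a ∈ A, ∀ b ∈ B, d < max a b - min a b) : TwinFree d (A ∪ B) := by
  intro x hx y hy hxy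
  rcases mem_union.1 hx with hx | hx <;> rcases mem_union.1 hy with hy | hy
  · exact hA x hx y hy hxy
  · exact hAB x hx y hy
  · rw [max_comm, min_comm]
    exact hAB y hy x hx
  · exact hB x hx y hy hxy

lemma twinFree_singleton (d a : ℕ) : TwinFree d {a} := by
  simp [TwinFree]

lemma twinFree_pair {d a b : ℕ} (h : a + d < b) : TwinFree d {a, b} := by
  intro x hx y hy hxy
  simp only [mem_insert, mem_singleton] at hx hy
  rcases hx with rfl | rfl <;> rcases hy with rfl | rfl <;> omega

lemma twinFree_map_addLeftEmbedding_iff {d a : ℕ} {β : Finset ℕ} :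
    TwinFree d (β.map (addLeftEmbedding a)) ↔ TwinFree d β := by
  simp only [twinFree_iff_lt, forall_mem_map, addLeftEmbedding_apply]
  refine forall₂_congr fun x _ => forall₂_congr fun y _ => ?_
  omega

def twinFreeSubsets (d : ℕ) (S : Finset ℕ) : Finset (Finset ℕ) := S.powerset.filter (TwinFree d)

@[simp]
lemma mem_twinFreeSubsets {d : ℕ} {S β : Finset ℕ} :
    β ∈ twinFreeSubsets d S ↔ β ⊆ S ∧ TwinFree d β := by
  simp [twinFreeSubsets]

lemma card_twinFreeSubsets_map_addLeftEmbedding (d a : ℕ) (S : Finset ℕ) :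
    #(twinFreeSubsets d (S.map (addLeftEmbedding a))) = #(twinFreeSubsets d S) := by
  refine (card_nbij (·.map (addLeftEmbedding a)) (fun β hβ => ?_)
    (fun β _ γ _ h => map_injective _ h) (fun γ hγ => ?_)).symm
  · simp only [mem_coe, mem_twinFreeSubsets] at hβ ⊢
    exact ⟨map_subset_map.2 hβ.1, twinFree_map_addLeftEmbedding_iff.2 hβ.2⟩
  · simp only [mem_coe, mem_twinFreeSubsets] at hγ
    obtain ⟨u, hu, rfl⟩ := subset_map_iff.1 hγ.1
    exact ⟨u, by simpa using ⟨hu, twinFree_map_addLeftEmbedding_iff.1 hγ.2⟩, rfl⟩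

def twinFreeCount (d m : ℕ) : ℕ := #(twinFreeSubsets d (Icc 1 m))

lemma N1_eq_twinFreeCount (d t : ℕ) : N1 d t = twinFreeCount d (t - 1) := rfl

lemma card_twinFreeSubsets_Icc (d a b : ℕ) :
    #(twinFreeSubsets d (Icc (a + 1) b)) = twinFreeCount d (b - a) := by
  have : Icc (a + 1) b = (Icc 1 (b - a)).map (addLeftEmbedding a) := by
    ext x
    simp only [mem_Icc, mem_map, addLeftEmbedding_apply]
    constructor
    · intro hx
      exact ⟨x - a, by omega, by omega⟩
    · rintro ⟨y, hy, rfl⟩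
      omega
  rw [this, card_twinFreeSubsets_map_addLeftEmbedding, twinFreeCount]

lemma twinFreeCount_zero (d : ℕ) : twinFreeCount d 0 = 1 := by
  simp [twinFreeCount, twinFreeSubsets, filter_singleton, TwinFree]

lemma filter_not_mem_twinFreeSubsets_Icc (d m : ℕ) :
    (twinFreeSubsets d (Icc 1 (m + 1))).filter (m + 1 ∉ ·) = twinFreeSubsets d (Icc 1 m) := by
  ext β
  simp only [mem_filter, mem_twinFreeSubsets, subset_iff, mem_Icc]
  constructor
  · rintro ⟨⟨hβ, htf⟩, hm⟩
    refine ⟨fun x hx => ?_, htf⟩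
    have := hβ hx
    have : x ≠ m + 1 := ne_of_mem_of_not_mem hx hm
    omega
  · rintro ⟨hβ, htf⟩
    refine ⟨⟨fun x hx => ?_, htf⟩, fun hm => ?_⟩
    · have := hβ hx
      omega
    · have := hβ hm
      omega

lemma card_filter_mem_twinFreeSubsets_Icc (d m : ℕ) :
    #((twinFreeSubsets d (Icc 1 (m + 1))).filter (m + 1 ∈ ·)) = twinFreeCount d (m - d) := by
  refine card_eq_of_mem_iff_sdiff_mem (A := {m + 1}) (fun γ hγ => ?_) fun β => ?_
  · refine disjoint_singleton_right.2 fun hm => ?_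
    have := mem_Icc.1 ((mem_twinFreeSubsets.1 hγ).1 hm)
    omega
  · simp only [mem_filter, mem_twinFreeSubsets, singleton_subset_iff]
    constructor
    · rintro ⟨⟨hβ, htf⟩, hm⟩
      refine ⟨hm, fun x hx => ?_, htf.mono sdiff_subset⟩
      obtain ⟨hxβ, hxm⟩ := mem_sdiff.1 hx
      have := mem_Icc.1 (hβ hxβ)
      have := twinFree_iff_lt.1 htf x hxβ (m + 1) hm (by simp at hxm; omega)
      rw [mem_Icc]
      omega
    · rintro ⟨hm, hβ, htf⟩
      rw [← sdiff_union_of_subset (singleton_subset_iff.2 hm)]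
      refine ⟨⟨union_subset (hβ.trans (Icc_subset_Icc_right (by omega))) (by simp),
        htf.union (twinFree_singleton d _) fun x hx y hy => ?_⟩, by simp⟩
      have := mem_Icc.1 (hβ hx)
      rw [mem_singleton.1 hy]
      omega

lemma twinFreeCount_succ (d m : ℕ) :
    twinFreeCount d (m + 1) = twinFreeCount d m + twinFreeCount d (m - d) := by
  rw [twinFreeCount, ← card_filter_add_card_filter_not (m + 1 ∈ ·),
    card_filter_mem_twinFreeSubsets_Icc, filter_not_mem_twinFreeSubsets_Icc, add_comm]
  rfl

lemma twinFreeCount_of_le {d m : ℕ} (h : m ≤ d) : twinFreeCount d m = m + 1 := by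
  induction m with
  | zero => exact twinFreeCount_zero d
  | succ m ih => rw [twinFreeCount_succ, ih (by omega), Nat.sub_eq_zero_of_le (by omega),
      twinFreeCount_zero]

-- The condition of `N` for `x ≥ s + r` is vacuous on subsets of `{1, …, s + r - 1}`.
def shiftClosedSets (d r s : ℕ) : Finset (Finset ℕ) :=
  (twinFreeSubsets d (Icc 1 (s + r - 1))).filter fun β => ∀ x ∈ β, s ≤ x → x - s ∈ β

lemma N_eq_card_shiftClosedSets (d r s : ℕ) : N d r s = #(shiftClosedSets d r s) := by
  unfold N shiftClosedSets twinFreeSubsets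
  rw [filter_filter]
  refine congrArg card (filter_congr fun β hβ => ?_)
  have : ∀ x ∈ β, s + r ≤ x → x - (s + r) ∈ β := fun x hx hx' => by
    have := mem_Icc.1 (mem_powerset.1 hβ hx)
    omega
  tauto

lemma N_zero (d r : ℕ) : N d r 0 = N1 d r := by
  simp [N_eq_card_shiftClosedSets, shiftClosedSets, N1, twinFreeSubsets]

lemma filter_lt_shiftClosedSets (d r s : ℕ) :
    (shiftClosedSets d r s).filter (fun β => ∀ x ∈ β, x < s) =
      twinFreeSubsets d (Icc 1 (s - 1)) := by
  ext β
  simp only [shiftClosedSets, mem_filter, mem_twinFreeSubsets, subset_iff, mem_Icc]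
  constructor
  · rintro ⟨⟨⟨hβ, htf⟩, -⟩, hlt⟩
    refine ⟨fun x hx => ?_, htf⟩
    have := hβ hx
    have := hlt x hx
    omega
  · rintro ⟨hβ, htf⟩
    have hlt : ∀ x ∈ β, x < s := fun x hx => by
      have := hβ hx
      omega
    refine ⟨⟨⟨fun x hx => ?_, htf⟩, fun x hx hsx => absurd (hlt x hx) (by omega)⟩, hlt⟩
    have := hβ hx
    omega

lemma filter_not_lt_shiftClosedSets_of_le {d r s : ℕ} (hs : 0 < s) (hsd : s ≤ d) :
    (shiftClosedSets d r s).filter (fun β => ¬∀ x ∈ β, x < s) = ∅ := by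
  refine filter_false_of_mem fun β hβ hlt => ?_
  simp only [shiftClosedSets, mem_filter, mem_twinFreeSubsets] at hβ
  obtain ⟨⟨-, htf⟩, hclosed⟩ := hβ
  push Not at hlt
  obtain ⟨x, hx, hsx⟩ := hlt
  have := htf x hx (x - s) (hclosed x hx hsx) (by omega)
  omega

lemma filter_not_lt_shiftClosedSets (d r s : ℕ) :
    (shiftClosedSets d r s).filter (fun β => ¬∀ x ∈ β, x < s) =
      (Icc 1 (r - 1)).biUnion fun j => (shiftClosedSets d r s).filter (s + j ∈ ·) := by
  ext β
  simp only [mem_biUnion, mem_filter, mem_Icc, not_forall, not_lt, exists_prop]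
  constructor
  · rintro ⟨hβ, x, hx, hsx⟩
    have hβ' := hβ
    simp only [shiftClosedSets, mem_filter, mem_twinFreeSubsets] at hβ'
    have := mem_Icc.1 (hβ'.1.1 hx)
    have := mem_Icc.1 (hβ'.1.1 (hβ'.2 x hx hsx))
    exact ⟨x - s, by omega, hβ, by rwa [Nat.add_sub_cancel' hsx]⟩
  · rintro ⟨j, -, hβ, hsj⟩
    exact ⟨hβ, s + j, hsj, by omega⟩

lemma pairwiseDisjoint_filter_add_mem_shiftClosedSets {d r s : ℕ} (hrd : r ≤ d) :
    (Icc 1 (r - 1) : Set ℕ).PairwiseDisjoint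
      fun j => (shiftClosedSets d r s).filter (s + j ∈ ·) := by
  intro j hj j' hj' hne
  simp only [coe_Icc, Set.mem_Icc] at hj hj'
  refine disjoint_left.2 fun β hβ hβ' => ?_
  simp only [shiftClosedSets, mem_filter, mem_twinFreeSubsets] at hβ hβ'
  have := hβ.1.1.2 (s + j) hβ.2 (s + j') hβ'.2 (by omega)
  omega

lemma mem_shiftClosedSets_of_add_mem {d r s j : ℕ} {β : Finset ℕ} (hrd : r ≤ d) (hj : j < r)
    (hβ : β ∈ shiftClosedSets d r s) (hsj : s + j ∈ β) :
    j ∈ β ∧ ∀ y ∈ β, y ≠ j → y ≠ s + j → j + d < y ∧ y + d < s + j := by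
  simp only [shiftClosedSets, mem_filter, mem_twinFreeSubsets] at hβ
  obtain ⟨⟨hsub, htf⟩, hclosed⟩ := hβ
  have hjβ : j ∈ β := by simpa using hclosed (s + j) hsj (by omega)
  refine ⟨hjβ, fun y hy hyj hysj => ?_⟩
  have := mem_Icc.1 (hsub hy)
  have hys : y < s := by
    by_contra! hsy
    have := htf y hy (s + j) hsj hysj
    omega
  have := htf y hy j hjβ hyj
  have := htf y hy (s + j) hsj hysj
  omega

lemma card_filter_add_mem_shiftClosedSets {d r s j : ℕ} (hrd : r ≤ d) (hds : d < s)
    (hj : j ∈ Icc 1 (r - 1)) :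
    #((shiftClosedSets d r s).filter (s + j ∈ ·)) = twinFreeCount d (s - 2 * d - 1) := by
  rw [mem_Icc] at hj
  have hgap : s - 2 * d - 1 = s + j - d - 1 - (j + d) := by omega
  rw [hgap, ← card_twinFreeSubsets_Icc]
  refine card_eq_of_mem_iff_sdiff_mem (A := {j, s + j}) (fun γ hγ => ?_)
    fun β => ⟨fun hβ => ?_, ?_⟩
  · refine disjoint_left.2 fun x hx hxA => ?_
    have := mem_Icc.1 ((mem_twinFreeSubsets.1 hγ).1 hx)
    simp only [mem_insert, mem_singleton] at hxA
    omega
  · obtain ⟨hβ, hsj⟩ := mem_filter.1 hβ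
    obtain ⟨hjβ, hmid⟩ := mem_shiftClosedSets_of_add_mem hrd (by omega) hβ hsj
    refine ⟨insert_subset hjβ (singleton_subset_iff.2 hsj),
      mem_twinFreeSubsets.2 ⟨fun y hy => ?_, ?_⟩⟩
    · simp only [mem_sdiff, mem_insert, mem_singleton, not_or] at hy
      have := hmid y hy.1 hy.2.1 hy.2.2
      rw [mem_Icc]
      omega
    · exact (mem_twinFreeSubsets.1 (mem_filter.1 hβ).1).2.mono sdiff_subset
  · rintro ⟨hA, hγ⟩
    rw [← sdiff_union_of_subset hA]
    generalize β \ {j, s + j} = γ at hγ ⊢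
    obtain ⟨hγsub, hγtf⟩ := mem_twinFreeSubsets.1 hγ
    have hγIcc : ∀ x ∈ γ, j + d + 1 ≤ x ∧ x ≤ s + j - d - 1 := fun x hx => mem_Icc.1 (hγsub hx)
    simp only [shiftClosedSets, mem_filter, mem_twinFreeSubsets, mem_union, mem_insert,
      mem_singleton]
    refine ⟨⟨⟨union_subset (hγsub.trans (Icc_subset_Icc (by omega) (by omega)))
      (insert_subset (by simp; omega) (by simp; omega)),
      hγtf.union (twinFree_pair (by omega)) fun x hx y hy => ?_⟩, fun x hx hsx => ?_⟩, by simp⟩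
    · have := hγIcc x hx
      simp only [mem_insert, mem_singleton] at hy
      omega
    · rcases hx with hx | rfl | rfl
      · have := hγIcc x hx
        omega
      · omega
      · simp

lemma N_eq_twinFreeCount {d r s : ℕ} (hrd : r ≤ d) (hs : 0 < s) :
    N d r s = twinFreeCount d (s - 1) +
      if d < s then (r - 1) * twinFreeCount d (s - 2 * d - 1) else 0 := by
  rw [N_eq_card_shiftClosedSets, ← card_filter_add_card_filter_not (fun β => ∀ x ∈ β, x < s),
    filter_lt_shiftClosedSets, twinFreeCount]
  congr 1
  split_ifs with hds
  · rw [filter_not_lt_shiftClosedSets,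
      card_biUnion (pairwiseDisjoint_filter_add_mem_shiftClosedSets hrd),
      sum_congr rfl fun j hj => card_filter_add_mem_shiftClosedSets hrd hds hj, sum_const,
      Nat.card_Icc, smul_eq_mul, Nat.add_sub_cancel]
  · rw [filter_not_lt_shiftClosedSets_of_le hs (by omega), card_empty]

lemma N_eq_N_sub_one_add {d r s : ℕ} (hrd : r ≤ d) (hs : 2 ≤ s) :
    N d r s = N d r (s - 1) + if s ≤ d then 1 else N d r (s - d - 1) := by
  obtain ⟨m, rfl⟩ : ∃ m, s = m + 2 := ⟨s - 2, by omega⟩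
  rw [N_eq_twinFreeCount hrd (by omega), N_eq_twinFreeCount hrd (by omega),
    show m + 2 - 1 = m + 1 by omega, Nat.add_sub_cancel, twinFreeCount_succ]
  rcases lt_trichotomy (m + 1) d with hmd | rfl | hmd
  · rw [if_neg (by omega), if_neg (by omega), if_pos (by omega),
      Nat.sub_eq_zero_of_le (by omega : m ≤ d), twinFreeCount_zero]
  · rw [if_pos (by omega), if_neg (by omega), if_neg (by omega),
      show m + 2 - (m + 1) - 1 = 0 by omega, show m - (m + 1) = 0 by omega,
      show m + 2 - 2 * (m + 1) - 1 = 0 by omega, N_zero, N1_eq_twinFreeCount,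
      twinFreeCount_of_le (m := r - 1) (by omega), twinFreeCount_zero]
    omega
  · rw [if_pos hmd, if_pos (by omega), if_neg (by omega), N_eq_twinFreeCount hrd (by omega),
      show m + 2 - d - 1 - 1 = m - d by omega, show m + 1 - 2 * d - 1 = m - 2 * d by omega]
    split_ifs with h2d
    · rw [show m + 2 - 2 * d - 1 = m - 2 * d + 1 by omega, twinFreeCount_succ,
        show m + 2 - d - 1 - 2 * d - 1 = m - 2 * d - d by omega]
      ring
    · rw [show m + 2 - 2 * d - 1 = 0 by omega, show m - 2 * d = 0 by omega]
      ring

lemma Next_natCast_sub (d r s k : ℕ) :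
    Next d r ((s : ℤ) - k) = if s < k then 1 else N d r (s - k) := by
  unfold Next
  rcases lt_trichotomy s k with h | rfl | h
  · rw [if_pos (by omega), if_pos h]
  · simp [N_zero]
  · rw [if_neg (by omega), if_neg (by omega), if_neg (by omega)]
    congr
    omega

theorem N_recurrence_general (d r : ℕ) (hrd : r ≤ d) :
    N d r 1 = 1 ∧
    ∀ s : ℕ, 2 ≤ s →
      N d r s = Next d r ((s : ℤ) - 1) + Next d r ((s : ℤ) - d - 1) := by
  refine ⟨by simp [N_eq_twinFreeCount hrd one_pos, twinFreeCount_zero]; omega, fun s hs => ?_⟩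
  rw [N_eq_N_sub_one_add hrd hs, sub_sub, ← Nat.cast_one (R := ℤ), ← Nat.cast_add,
    Next_natCast_sub, Next_natCast_sub, if_neg (show ¬s < 1 by omega), Nat.sub_sub]
  simp only [Nat.lt_add_one_iff]

theorem N_recurrence (d r : ℕ) (hr : 0 < r) (hrd : r ≤ d) :
    N d r 1 = 1 ∧
    ∀ s : ℕ, 2 ≤ s →
      N d r s = Next d r ((s : ℤ) - 1) + Next d r ((s : ℤ) - d - 1) :=
  N_recurrence_general d r hrd
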